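/- arXiv:2310.15755 — 3 statements merged into one kernel-verified Lean document; each statement's English description precedes it below -/
import Mathlib

section
/- Let r > e and define f(x) = r·x·e^{-x}. Set a = f(f(1)) and b = f(1). Then f maps the closed interval I = [a, b] into itself, f restricted to I is strictly increasing on [a, 1] and strictly decreasing on [1, b], and satisfies f(a) ≥ a, f(b) < b, and f(x) > x for all x ∈ (a, 1]. -/
/-!
The map `x ↦ r x e^{-x}` has derivative `r (1 - x) e^{-x}`, so it rises on `(-∞, 1]` to its
maximum `b = r/e` and falls on `[1, ∞)`. For `0 < x` one has `x < f x ↔ e^x < r`; hence `f x > x`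
on `(0, 1]` since `r > e`, and `f b < b` because `r < e^{r/e}` (the inequality `y + 1 < e^y` at
`y = r/e - 1`). With `a = f b > 0`, the two monotone pieces then show that `[a, b]` is invariant.
-/

open Real Set

noncomputable def rickerMap (r x : ℝ) : ℝ := r * x * exp (-x)

theorem mapsTo_Icc_of_monotoneOn_of_antitoneOn {α : Type*} [LinearOrder α] {g : α → α}
    {a b m : α} (hmono : MonotoneOn g (Iic m)) (hanti : AntitoneOn g (Ici m)) (hmb : m ≤ b)
    (hgm : g m = b) (hgb : g b = a) (hga : a ≤ g a) : MapsTo g (Icc a b) (Icc a b) := by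
  rintro x ⟨hax, hxb⟩
  rcases le_total x m with hxm | hmx
  · exact ⟨hga.trans (hmono (hax.trans hxm) hxm hax), hgm ▸ hmono hxm le_rfl hxm⟩
  · exact ⟨hgb ▸ hanti hmx hmb hxb, hgm ▸ hanti le_rfl hmx hmx⟩

theorem lt_exp_mul_exp_neg_one {r : ℝ} (hr : r ≠ exp 1) : r < exp (r * exp (-1)) := by
  have hr_eq : r = r * exp (-1) * exp 1 := by rw [mul_assoc, ← exp_add]; simp
  have hne : r * exp (-1) - 1 ≠ 0 := fun h => hr (by rw [hr_eq, sub_eq_zero.1 h, one_mul])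
  have h := add_one_lt_exp hne
  rw [sub_add_cancel, exp_sub] at h
  calc r = r * exp (-1) * exp 1 := hr_eq
    _ < exp (r * exp (-1)) / exp 1 * exp 1 := by gcongr
    _ = exp (r * exp (-1)) := div_mul_cancel₀ _ (exp_pos _).ne'

namespace rickerMap

variable {r : ℝ}

theorem apply_one (r : ℝ) : rickerMap r 1 = r * exp (-1) := by
  simp [rickerMap]

theorem pos {x : ℝ} (hr : 0 < r) (hx : 0 < x) : 0 < rickerMap r x := by
  unfold rickerMap
  positivity

theorem le_apply_one (hr : 0 ≤ r) (x : ℝ) : rickerMap r x ≤ rickerMap r 1 := by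
  rw [apply_one, rickerMap, mul_assoc]
  exact mul_le_mul_of_nonneg_left (mul_exp_neg_le_exp_neg_one x) hr

theorem self_lt_iff {x : ℝ} (hx : 0 < x) : x < rickerMap r x ↔ exp x < r := by
  rw [rickerMap, mul_comm r, mul_assoc, lt_mul_iff_one_lt_right hx, exp_neg,
    ← div_eq_mul_inv, one_lt_div (exp_pos x)]

theorem lt_self_iff {x : ℝ} (hx : 0 < x) : rickerMap r x < x ↔ r < exp x := by
  rw [rickerMap, mul_comm r, mul_assoc, mul_lt_iff_lt_one_right hx, exp_neg,
    ← div_eq_mul_inv, div_lt_one (exp_pos x)]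

theorem hasDerivAt (r x : ℝ) : HasDerivAt (rickerMap r) (r * (1 - x) * exp (-x)) x := by
  have h : HasDerivAt (rickerMap r) (r * 1 * exp (-x) + r * x * (exp (-x) * -1)) x :=
    ((hasDerivAt_id' x).const_mul r).mul (hasDerivAt_neg x).exp
  exact h.congr_deriv (by ring)

theorem continuous (r : ℝ) : Continuous (rickerMap r) :=
  continuous_iff_continuousAt.2 fun x => (hasDerivAt r x).continuousAt

theorem strictMonoOn (hr : 0 < r) : StrictMonoOn (rickerMap r) (Iic 1) := by
  refine strictMonoOn_of_deriv_pos (convex_Iic 1) (continuous r).continuousOn fun x hx => ?_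
  rw [interior_Iic, mem_Iio] at hx
  rw [(hasDerivAt r x).deriv]
  have : 0 < 1 - x := sub_pos.2 hx
  positivity

theorem strictAntiOn (hr : 0 < r) : StrictAntiOn (rickerMap r) (Ici 1) := by
  refine strictAntiOn_of_deriv_neg (convex_Ici 1) (continuous r).continuousOn fun x hx => ?_
  rw [interior_Ici, mem_Ioi] at hx
  rw [(hasDerivAt r x).deriv]
  exact mul_neg_of_neg_of_pos (mul_neg_of_pos_of_neg hr (sub_neg.2 hx)) (exp_pos _)

end rickerMap

/-- For r > e and f(x) = r·x·e^{-x}, with a = f(f(1)) and b = f(1):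
f maps I = [a,b] into itself, is strictly increasing on [a,1],
strictly decreasing on [1,b], and satisfies f(a) ≥ a, f(b) < b,
and f(x) > x for all x ∈ (a,1]. -/
theorem stmt_0 (r : ℝ) (hr : Real.exp 1 < r)
    (f : ℝ → ℝ) (hf : ∀ x, f x = r * x * Real.exp (-x))
    (a b : ℝ) (ha : a = f (f 1)) (hb : b = f 1) :
    Set.MapsTo f (Set.Icc a b) (Set.Icc a b) ∧
    StrictMonoOn f (Set.Icc a 1) ∧
    StrictAntiOn f (Set.Icc 1 b) ∧
    a ≤ f a ∧
    f b < b ∧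
    ∀ x ∈ Set.Ioc a 1, x < f x := by
  obtain rfl : f = rickerMap r := funext hf
  have hr0 : 0 < r := (exp_pos 1).trans hr
  have hb_eq : b = r * exp (-1) := hb.trans (rickerMap.apply_one r)
  have hb1 : 1 < b := by
    calc 1 = exp 1 * exp (-1) := by rw [← exp_add]; simp
      _ < b := hb_eq ▸ mul_lt_mul_of_pos_right hr (exp_pos _)
  have hb0 : 0 < b := one_pos.trans hb1
  have hgb : rickerMap r b = a := by rw [ha, hb]
  have ha0 : 0 < a := hgb ▸ rickerMap.pos hr0 hb0
  have hfa : a ≤ rickerMap r a := by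
    rcases le_or_gt a 1 with ha1 | ha1
    · exact ((rickerMap.self_lt_iff ha0).2 ((exp_le_exp.2 ha1).trans_lt hr)).le
    · have hab : a ≤ b := hgb ▸ hb ▸ rickerMap.le_apply_one hr0.le b
      exact hgb ▸ (rickerMap.strictAntiOn hr0).antitoneOn ha1.le hb1.le hab
  refine ⟨mapsTo_Icc_of_monotoneOn_of_antitoneOn (rickerMap.strictMonoOn hr0).monotoneOn
      (rickerMap.strictAntiOn hr0).antitoneOn hb1.le hb.symm hgb hfa,
    (rickerMap.strictMonoOn hr0).mono Icc_subset_Iic_self,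
    (rickerMap.strictAntiOn hr0).mono Icc_subset_Ici_self, hfa,
    (rickerMap.lt_self_iff hb0).2 (hb_eq ▸ lt_exp_mul_exp_neg_one hr.ne'), fun x hx => ?_⟩
  exact (rickerMap.self_lt_iff (ha0.trans hx.1)).2 ((exp_le_exp.2 hx.2).trans_lt hr)
end

section
/- Let β = 5 and define h(x) = λ·x·(x+1)^{-5} with m = 1/4. If λ > 3.052, then h maps the closed interval E = [h(h(m)), h(m)] into itself, h restricted to E is strictly increasing on [h(h(m)), m] and strictly decreasing on [m, h(m)], and satisfies h(h(h(m))) ≥ h(h(m)), h(h(m)) < h(m), and h(x) > x for all x ∈ (h(h(m)), m]. -/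
/-!
The derivative of `h x = λ x (x + 1)^(-β)` is `λ (x + 1)^(-β-1) (1 - (β - 1) x)`, so `h` increases
up to `m = 1/(β - 1)` and decreases after it. Its positive fixed point is `p = λ^(1/β) - 1`, and
`0 < x < p` means `(x + 1)^β < λ`, i.e. `x < h x`. If `m < p` (for `β = 5` this is
`λ > (5/4)^5 ≈ 3.0518`), the two monotone pieces give `m < p < h m` and `0 < h (h m) < p`; hence
every point of `(0, p)`, in particular `h (h m)` and all of `(h (h m), m]`, is pushed up, and
`[h (h m), h m]` is mapped into itself.
-/

open Set

noncomputable def hassell (lam β x : ℝ) : ℝ := lam * x * (x + 1) ^ (-β)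

namespace hassell

variable {lam β : ℝ}

theorem hasDerivAt {x : ℝ} (hx : -1 < x) :
    HasDerivAt (hassell lam β) (lam * (x + 1) ^ (-β - 1) * (1 - (β - 1) * x)) x := by
  have hx1 : x + 1 ≠ 0 := by linarith
  have hpow := ((hasDerivAt_id x).add_const 1).rpow_const (p := -β) (Or.inl hx1)
  refine (((hasDerivAt_id x).const_mul lam).mul hpow).congr_deriv ?_
  simp only [id, Real.rpow_sub_one hx1]
  field_simp
  ring

theorem pos (hlam : 0 < lam) {x : ℝ} (hx : 0 < x) : 0 < hassell lam β x := by
  unfold hassell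
  positivity

theorem isFixedPt (hlam : 0 < lam) (hβ : β ≠ 0) :
    Function.IsFixedPt (hassell lam β) (lam ^ β⁻¹ - 1) := by
  rw [Function.IsFixedPt, hassell, sub_add_cancel, Real.rpow_neg (by positivity),
    Real.rpow_inv_rpow hlam.le hβ]
  field_simp

theorem self_lt_of_mem_Ioo (hlam : 0 < lam) (hβ : 0 < β) {x : ℝ}
    (hx : x ∈ Ioo 0 (lam ^ β⁻¹ - 1)) : x < hassell lam β x := by
  have hx1 : 0 < x + 1 := by linarith [hx.1]
  have hlt : (x + 1) ^ β < lam :=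
    (Real.lt_rpow_inv_iff_of_pos hx1.le hlam.le hβ).mp (by linarith [hx.2])
  rw [hassell, Real.rpow_neg hx1.le, ← div_eq_mul_inv, lt_div_iff₀ (by positivity)]
  nlinarith [hx.1]

section

variable (hlam : 0 < lam) (hβ : 1 < β)
include hlam hβ

theorem strictMonoOn : StrictMonoOn (hassell lam β) (Ioc (-1) (1 / (β - 1))) := by
  refine strictMonoOn_of_deriv_pos (convex_Ioc _ _)
    (fun x hx => (hasDerivAt hx.1).continuousAt.continuousWithinAt) fun x hx => ?_
  rw [interior_Ioc, mem_Ioo, lt_div_iff₀ (by linarith)] at hx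
  rw [(hasDerivAt hx.1).deriv]
  have hpow : 0 < (x + 1) ^ (-β - 1) := Real.rpow_pos_of_pos (by linarith) _
  have hfactor : 0 < 1 - (β - 1) * x := by linarith
  positivity

theorem strictAntiOn : StrictAntiOn (hassell lam β) (Ici (1 / (β - 1))) := by
  have hm : 0 < 1 / (β - 1) := one_div_pos.mpr (by linarith)
  refine strictAntiOn_of_deriv_neg (convex_Ici _)
    (fun x hx => (hasDerivAt (by linarith [mem_Ici.mp hx])).continuousAt.continuousWithinAt)
    fun x hx => ?_
  rw [interior_Ici, mem_Ioi, div_lt_iff₀ (by linarith)] at hx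
  rw [(hasDerivAt (by nlinarith)).deriv]
  have hpow : 0 < (x + 1) ^ (-β - 1) := Real.rpow_pos_of_pos (by nlinarith) _
  have hfactor : 1 - (β - 1) * x < 0 := by linarith
  exact mul_neg_of_pos_of_neg (by positivity) hfactor

theorem unimodal_on_invariant_Icc (hm_lt : 1 / (β - 1) < lam ^ β⁻¹ - 1) :
    let f := hassell lam β
    let m := 1 / (β - 1)
    MapsTo f (Icc (f (f m)) (f m)) (Icc (f (f m)) (f m)) ∧
    StrictMonoOn f (Icc (f (f m)) m) ∧ StrictAntiOn f (Icc m (f m)) ∧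
    f (f m) ≤ f (f (f m)) ∧ f (f m) < f m ∧ ∀ x ∈ Ioc (f (f m)) m, x < f x := by
  intro f m
  set p := lam ^ β⁻¹ - 1
  have hm : 0 < m := one_div_pos.mpr (by linarith)
  have hfp : f p = p := isFixedPt hlam (by positivity)
  have mono := strictMonoOn hlam hβ
  have anti := strictAntiOn hlam hβ
  have hpM : p < f m := hfp ▸ anti self_mem_Ici hm_lt.le hm_lt
  have hmM : m < f m := hm_lt.trans hpM
  have hLp : f (f m) < p := hfp ▸ anti hm_lt.le hmM.le hpM
  have hL : 0 < f (f m) := pos hlam (hm.trans hmM)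
  have below_p : ∀ x ∈ Ioo 0 p, x < f x :=
    fun x hx => self_lt_of_mem_Ioo hlam (by linarith) hx
  have hLfL : f (f m) < f (f (f m)) := below_p _ ⟨hL, hLp⟩
  refine ⟨fun x hx => ?_, mono.mono fun x hx => ⟨by linarith [hx.1], hx.2⟩,
    anti.mono fun x hx => hx.1, hLfL.le, anti self_mem_Ici hmM.le hmM,
    fun x hx => below_p x ⟨hL.trans hx.1, hx.2.trans_lt hm_lt⟩⟩
  rcases le_total x m with hxm | hmx
  · have hL' : f (f m) ∈ Ioc (-1) m := ⟨by linarith, hx.1.trans hxm⟩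
    have hx' : x ∈ Ioc (-1) m := ⟨by linarith [hx.1], hxm⟩
    exact ⟨hLfL.le.trans (mono.monotoneOn hL' hx' hx.1),
      mono.monotoneOn hx' ⟨by linarith, le_rfl⟩ hxm⟩
  · exact ⟨anti.antitoneOn hmx hmM.le hx.2, anti.antitoneOn self_mem_Ici hmx hmx⟩

end

end hassell

/-- For β = 5, h(x) = λ·x·(x+1)^{-5}, m = 1/4, and λ > 3.052:
h maps E = [h(h(m)), h(m)] into itself, is strictly increasing on [h(h(m)), m],
strictly decreasing on [m, h(m)], and satisfies h(h(h(m))) ≥ h(h(m)),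
h(h(m)) < h(m), and h(x) > x for all x ∈ (h(h(m)), m]. -/
theorem stmt_3 (lam : ℝ) (hlam : 3.052 < lam)
    (h : ℝ → ℝ) (hh : ∀ x, h x = lam * x * (x + 1) ^ (-5 : ℤ))
    (m : ℝ) (hm : m = 1 / 4)
    (E : Set ℝ) (hE : E = Set.Icc (h (h m)) (h m)) :
    Set.MapsTo h E E ∧
    StrictMonoOn h (Set.Icc (h (h m)) m) ∧
    StrictAntiOn h (Set.Icc m (h m)) ∧
    h (h m) ≤ h (h (h m)) ∧
    h (h m) < h m ∧
    ∀ x ∈ Set.Ioc (h (h m)) m, x < h x := by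
  obtain rfl : h = hassell lam 5 := funext fun x => by
    rw [hh, hassell, ← Real.rpow_intCast]
    push_cast
    rfl
  have hm_lt : 1 / ((5 : ℝ) - 1) < lam ^ (5 : ℝ)⁻¹ - 1 := by
    have : (5 / 4 : ℝ) < lam ^ (5 : ℝ)⁻¹ :=
      (Real.lt_rpow_inv_iff_of_pos (by norm_num) (by linarith) (by norm_num)).mpr
        (by norm_num; linarith)
    linarith
  subst hm hE
  have key := hassell.unimodal_on_invariant_Icc (by linarith) (by norm_num) hm_lt
  norm_num at key ⊢
  exact key
end

section
/- Let r > 9.549, define f(x) = r·x·e^{-x}, and set b = f(1) = r/e. Then the set Π = {x ∈ [1, b] : f(x) ∈ [1, b] and f(f(x)) = x} is the singleton {ln r}, where ln r is the unique fixed point of f on (0,∞). -/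
/-!
Write `L = log r`, so that `f x = x * exp (L - x)`. A 2-cycle `x ↦ y ↦ x` of `f` satisfies
`x * y * exp (2L - x - y) = x * y`, hence `x + y = 2L`; so the smaller point is `x = L - u`
with `u ≥ 0`, and then `x * (exp u - 1) = 2u`, i.e. `L = u + 2u / (exp u - 1)` if `u > 0`.
The right-hand side is strictly increasing in `u` (this is `sinh u > u`), and `x ≥ 1` means
`u ≤ L - 1`. At `u = L - 1` it is already below `L` as soon as `2L < r / e + 1`, which is where
the threshold `r > 9.549` enters. Hence `u = 0`, and the cycle is the fixed point `L`.
-/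

open Real Set

/-- If `x = L - u` is the smaller point of a 2-cycle, then `L = cycleProfile u`. -/
noncomputable def cycleProfile (u : ℝ) : ℝ := u + 2 * u / (exp u - 1)

lemma hasDerivAt_cycleProfile {u : ℝ} (hu : u ≠ 0) :
    HasDerivAt cycleProfile (1 + (2 * (exp u - 1) - 2 * u * exp u) / (exp u - 1) ^ 2) u := by
  have hne : exp u - 1 ≠ 0 := fun h => hu (exp_eq_one_iff u |>.mp (sub_eq_zero.mp h))
  have hnum : HasDerivAt (fun u : ℝ => 2 * u) 2 u := by
    simpa using (hasDerivAt_id u).const_mul 2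
  have hden : HasDerivAt (fun u : ℝ => exp u - 1) (exp u) u := (hasDerivAt_exp u).sub_const 1
  exact (hasDerivAt_id u).add (hnum.div hden hne)

lemma two_mul_mul_exp_lt_exp_sq_sub_one {u : ℝ} (hu : 0 < u) :
    2 * u * exp u < exp u ^ 2 - 1 := by
  have hsinh : 2 * u < exp u - exp (-u) := by
    have := self_lt_sinh_iff.mpr hu
    rw [sinh_eq] at this
    linarith
  have hinv : exp (-u) * exp u = 1 := by rw [← exp_add, neg_add_cancel, exp_zero]
  nlinarith [mul_lt_mul_of_pos_right hsinh (exp_pos u)]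

lemma strictMonoOn_cycleProfile : StrictMonoOn cycleProfile (Ioi 0) := by
  refine strictMonoOn_of_deriv_pos (convex_Ioi 0) ?_ ?_
  · exact fun u hu => (hasDerivAt_cycleProfile (ne_of_gt hu)).continuousAt.continuousWithinAt
  · intro u hu
    rw [interior_Ioi] at hu
    rw [(hasDerivAt_cycleProfile (ne_of_gt hu)).deriv]
    have hden : 0 < (exp u - 1) ^ 2 := by
      have := one_lt_exp_iff.mpr hu
      positivity
    have : -1 < (2 * (exp u - 1) - 2 * u * exp u) / (exp u - 1) ^ 2 := by
      rw [lt_div_iff₀ hden]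
      nlinarith [two_mul_mul_exp_lt_exp_sq_sub_one hu]
    linarith

lemma eq_of_add_mul_exp_sub_eq {L x : ℝ} (hL : 2 * L < exp (L - 1) + 1) (hx : 1 ≤ x)
    (hxL : x ≤ L) (hcycle : x + x * exp (L - x) = 2 * L) : x = L := by
  by_contra hne
  set u := L - x with hu_def
  have hu : 0 < u := by rw [hu_def]; exact sub_pos.mpr (lt_of_le_of_ne hxL hne)
  have huL : u ≤ L - 1 := by linarith
  have hexp : 0 < exp u - 1 := sub_pos.mpr (one_lt_exp_iff.mpr hu)
  have hprofile_u : cycleProfile u = L := by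
    have hx_eq : x = 2 * u / (exp u - 1) := by
      rw [eq_div_iff hexp.ne']
      linear_combination hcycle
    rw [cycleProfile, ← hx_eq]
    ring
  have hprofile_top : cycleProfile (L - 1) < L := by
    have : 2 * (L - 1) / (exp (L - 1) - 1) < 1 := by
      rw [div_lt_one (by linarith [one_lt_exp_iff.mpr (hu.trans_le huL)])]
      linarith
    rw [cycleProfile]
    linarith
  have := strictMonoOn_cycleProfile.monotoneOn hu (hu.trans_le huL) huL
  linarith

lemma lt_exp_2_256437 : (9.549 : ℝ) < exp 2.256437 := by
  refine lt_of_lt_of_le ?_ (sum_le_exp_of_nonneg (by norm_num) 15)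
  simp only [Finset.sum_range_succ, Finset.sum_range_zero]
  norm_num [Nat.factorial]

lemma two_mul_log_lt_div_exp_one_add_one {r : ℝ} (hr : 9.549 < r) :
    2 * log r < r / exp 1 + 1 := by
  have hr0 : 0 < r := by linarith
  -- tangent line of `log` at `exp 2.256437`
  have htangent : log r - 2.256437 ≤ r / exp 2.256437 - 1 := by
    have := log_le_sub_one_of_pos (x := r / exp 2.256437) (by positivity)
    rwa [log_div hr0.ne' (exp_pos _).ne', log_exp] at this
  have h1 : r / exp 2.256437 < r / 9.549 :=
    div_lt_div_of_pos_left hr0 (by norm_num) lt_exp_2_256437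
  have h2 : r / 2.7182818286 < r / exp 1 :=
    div_lt_div_of_pos_left hr0 (exp_pos 1) exp_one_lt_d9
  have h3 : 2 * 2.256437 + 2 * (r / 9.549 - 1) < r / 2.7182818286 + 1 := by
    rw [div_add' _ _ _ (by norm_num), lt_div_iff₀ (by norm_num)]
    ring_nf
    linarith
  linarith

section ExpMap

variable {r : ℝ} {f : ℝ → ℝ}

lemma apply_eq_mul_exp_log_sub (hf : ∀ x, f x = r * x * exp (-x)) (hr : 0 < r) (x : ℝ) :
    f x = x * exp (log r - x) := by
  rw [hf, exp_sub, exp_log hr, exp_neg]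
  ring

lemma apply_eq_self_iff (hf : ∀ x, f x = r * x * exp (-x)) (hr : 0 < r) {x : ℝ} (hx : 0 < x) :
    f x = x ↔ x = log r := by
  rw [apply_eq_mul_exp_log_sub hf hr, mul_eq_left₀ hx.ne', exp_eq_one_iff, sub_eq_zero, eq_comm]

lemma add_eq_two_mul_log_of_apply_apply (hf : ∀ x, f x = r * x * exp (-x)) (hr : 0 < r)
    {x : ℝ} (hx : 0 < x) (hfx : 0 < f x) (hcycle : f (f x) = x) : x + f x = 2 * log r := by
  have hprod : x * f x * exp (2 * log r - (x + f x)) = x * f x := by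
    calc x * f x * exp (2 * log r - (x + f x))
        = (x * exp (log r - x)) * (f x * exp (log r - f x)) := by
          rw [mul_mul_mul_comm, ← exp_add]; ring_nf
      _ = f x * f (f x) := by
          rw [← apply_eq_mul_exp_log_sub hf hr x, ← apply_eq_mul_exp_log_sub hf hr (f x)]
      _ = x * f x := by rw [hcycle, mul_comm]
  rw [mul_eq_left₀ (by positivity), exp_eq_one_iff, sub_eq_zero] at hprod
  exact hprod.symm

lemma eq_log_of_apply_apply_eq (hf : ∀ x, f x = r * x * exp (-x)) (hr : 0 < r)
    (hL : 2 * log r < exp (log r - 1) + 1) {x : ℝ} (hx : 1 ≤ x) (hfx : 1 ≤ f x)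
    (hcycle : f (f x) = x) : x = log r := by
  have hsum := add_eq_two_mul_log_of_apply_apply hf hr (by linarith) (by linarith) hcycle
  rcases le_total x (f x) with hle | hle
  · refine eq_of_add_mul_exp_sub_eq hL hx (by linarith) ?_
    rw [← apply_eq_mul_exp_log_sub hf hr, hsum]
  · have hfx_eq : f x = log r := by
      refine eq_of_add_mul_exp_sub_eq hL hfx (by linarith) ?_
      rw [← apply_eq_mul_exp_log_sub hf hr, hcycle, add_comm, hsum]
    linarith

end ExpMap

/-- For r > 9.549, f(x) = r·x·e^{-x}, and b = f(1): the set
Π = {x ∈ [1,b] : f(x) ∈ [1,b] and f(f(x)) = x} is the singleton {ln r},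
where ln r is the unique fixed point of f on (0,∞). -/
theorem stmt_10 (r : ℝ) (hr : 9.549 < r)
    (f : ℝ → ℝ) (hf : ∀ x, f x = r * x * Real.exp (-x))
    (b : ℝ) (hb : b = f 1) :
    {x : ℝ | x ∈ Set.Icc 1 b ∧ f x ∈ Set.Icc 1 b ∧ f (f x) = x} = {Real.log r} ∧
    (∀ x : ℝ, 0 < x → (f x = x ↔ x = Real.log r)) := by
  have hr0 : 0 < r := by linarith
  have hb_exp : b = exp (log r - 1) := by
    rw [hb, apply_eq_mul_exp_log_sub hf hr0, one_mul]
  have hL : 2 * log r < exp (log r - 1) + 1 := by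
    rw [exp_sub, exp_log hr0]
    exact two_mul_log_lt_div_exp_one_add_one hr
  have hL_one : 1 ≤ log r := by
    rw [le_log_iff_exp_le hr0]
    linarith [exp_one_lt_d9]
  have hL_b : log r ≤ b := by
    linarith [hb_exp ▸ add_one_le_exp (log r - 1)]
  have hfL : f (log r) = log r := (apply_eq_self_iff hf hr0 (by linarith)).mpr rfl
  refine ⟨eq_singleton_iff_unique_mem.mpr ⟨?_, ?_⟩, fun x hx => apply_eq_self_iff hf hr0 hx⟩
  · exact ⟨⟨hL_one, hL_b⟩, by rw [hfL]; exact ⟨hL_one, hL_b⟩, by rw [hfL, hfL]⟩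
  · rintro x ⟨⟨hx, -⟩, ⟨hfx, -⟩, hcycle⟩
    exact eq_log_of_apply_apply_eq hf hr0 hL hx hfx hcycle
end
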